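/- arXiv:1401.1185 — 3 statements merged into one kernel-verified Lean document; each statement's English description precedes it below -/
import Mathlib

section
/- For a semistandard Young tableau T of shape λ+ρ, the total number of segments seg(T) equals the number of pairs (i,j) with 1 ≤ i ≤ j ≤ r such that a_{i,j}(T) ≠ a_{i-1,j}(T) (where a_{0,j}(T) = 0); equivalently, seg(T) equals the number of entries of the vector a(T) that are not circled, where a_{i,j} is circled iff a_{i,j} = a_{i-1,j}. -/
open scoped Classical

/-- A filling of a Young diagram of shape `λ+ρ` (strictly decreasing row
lengths `len 1 > len 2 > ... > len r > 0`) with entries in `{1,...,r+1}`,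
rows weakly increasing, columns strictly increasing, and row `i`
containing only entries `≥ i`.  `T i c` is the entry of row `i`
(1-indexed) in column `c` (1-indexed). -/
structure ShapedTableau where
  r : ℕ
  len : ℕ → ℕ
  T : ℕ → ℕ → ℕ
  r_pos : 1 ≤ r
  shape_strict : ∀ i, 1 ≤ i → i ≤ r → len (i + 1) < len i
  shape_zero : ∀ i, r < i → len i = 0
  row_weak : ∀ i c, 1 ≤ i → i ≤ r → 1 ≤ c → c + 1 ≤ len i → T i c ≤ T i (c + 1)
  col_strict : ∀ i c, 1 ≤ i → i + 1 ≤ r → 1 ≤ c → c ≤ len (i + 1) → T i c < T (i + 1) c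
  entry_lb : ∀ i c, 1 ≤ i → i ≤ r → 1 ≤ c → c ≤ len i → i ≤ T i c
  entry_ub : ∀ i c, 1 ≤ i → i ≤ r → 1 ≤ c → c ≤ len i → T i c ≤ r + 1

namespace ShapedTableau

variable (S : ShapedTableau)

/-- The set of (column indices of) cells of row `i`. -/
def cells (i : ℕ) : Finset ℕ := Finset.Icc 1 (S.len i)

/-- The number of `k`-entries in row `i`. -/
noncomputable def count (i k : ℕ) : ℕ := ((S.cells i).filter (fun c => S.T i c = k)).card

/-- `a i j` : the number of `(j+1)`-entries in rows `1` through `i`. -/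
noncomputable def a (i j : ℕ) : ℕ := ∑ i' ∈ Finset.Icc 1 i, S.count i' (j + 1)

/-- `b i j` : the number of boxes in row `i` with entry `≥ j+1`. -/
noncomputable def b (i j : ℕ) : ℕ := ((S.cells i).filter (fun c => j + 1 ≤ S.T i c)).card

/-- The value `k` appears in row `i`.  By semistandardness the `k`-boxes of a
row are consecutive, so this says exactly that row `i` has a `k`-segment. -/
def appears (i k : ℕ) : Prop := ∃ c, 1 ≤ c ∧ c ≤ S.len i ∧ S.T i c = k

/-- Column index of the leftmost box of the `k`-segment of row `i`. -/
noncomputable def lm (i k : ℕ) : ℕ := sInf {c | 1 ≤ c ∧ c ≤ S.len i ∧ S.T i c = k}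

/-- `θ i = ℓ_i - ℓ_{i+1}`. -/
def θ (i : ℕ) : ℕ := S.len i - S.len (i + 1)

/-- The smallest value `> k` appearing in row `i+1`. -/
noncomputable def nextBelow (i k : ℕ) : ℕ := sInf {m | k < m ∧ S.appears (i + 1) m}

/-- The `k`-segment of row `i` is *flush*: if some value `> k` appears in row
`i+1`, its leftmost box is in the same column as the leftmost box of the
segment of the smallest such value; otherwise, its length equals `θ i`. -/
def IsFlush (i k : ℕ) : Prop :=
  ((∃ m, k < m ∧ S.appears (i + 1) m) ∧ S.lm i k = S.lm (i + 1) (S.nextBelow i k)) ∨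
  ((¬ ∃ m, k < m ∧ S.appears (i + 1) m) ∧ S.count i k = S.θ i)

/-- Pairs `(i,k)` such that row `i` has a `k`-segment (with `k > i`). -/
noncomputable def segPairs : Finset (ℕ × ℕ) :=
  (Finset.Icc 1 S.r ×ˢ Finset.Icc 1 (S.r + 1)).filter
    (fun p => p.1 < p.2 ∧ S.appears p.1 p.2)

/-- `seg T` : the total number of segments of `T`. -/
noncomputable def seg : ℕ := S.segPairs.card

/-- `flush T` : the number of flush segments of `T`. -/
noncomputable def flushNum : ℕ :=
  (S.segPairs.filter (fun p => S.IsFlush p.1 p.2)).card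

/-- The gap criterion at `(i,k)` : (a) row `i` has no `k`-segment, and
(b) the smallest `L > k` with an `L`-segment in row `i` exists, row `i+1`
has no `p`-segment for `k+1 ≤ p ≤ L`, and that `L`-segment is flush. -/
def HasGapAt (i k : ℕ) : Prop :=
  1 ≤ i ∧ i < k ∧ k ≤ S.r ∧ ¬ S.appears i k ∧
  ∃ L, k < L ∧ S.appears i L ∧ (∀ m, k < m → m < L → ¬ S.appears i m) ∧
    (∀ p, k + 1 ≤ p → p ≤ L → ¬ S.appears (i + 1) p) ∧ S.IsFlush i L

def Gapless : Prop := ∀ i k, ¬ S.HasGapAt i k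

/-- `a i j` is circled iff `a i j = a (i-1) j`. -/
def Circled (i j : ℕ) : Prop := S.a i j = S.a (i - 1) j

/-- `a i j` is boxed iff `b i j ≥ θ i + b (i+1) (j+1)`. -/
def Boxed (i j : ℕ) : Prop := S.θ i + S.b (i + 1) (j + 1) ≤ S.b i j

/-- The Tokuyama coefficient `C_{λ+ρ}(T;q)`. -/
noncomputable def C (q : ℚ) : ℚ :=
  if S.Gapless then (-q⁻¹) ^ S.flushNum * (1 - q⁻¹) ^ (S.seg - S.flushNum) else 0

end ShapedTableau

lemma a_succ (S : ShapedTableau) (i j : ℕ) (hi : 1 ≤ i) :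
    S.a i j = S.a (i - 1) j + S.count i (j + 1) := by
  obtain ⟨m, rfl⟩ : ∃ m, i = m + 1 := ⟨i - 1, by omega⟩
  simp only [ShapedTableau.a, Nat.add_sub_cancel]
  rw [Finset.sum_Icc_succ_top (by omega : 1 ≤ m + 1)]

lemma appears_iff_count (S : ShapedTableau) (i k : ℕ) :
    S.appears i k ↔ S.count i k ≠ 0 := by
  simp only [ShapedTableau.appears, ShapedTableau.count, ShapedTableau.cells,
    ne_eq, Finset.card_eq_zero, ← Finset.nonempty_iff_ne_empty, Finset.filter_nonempty_iff,
    Finset.mem_Icc]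
  constructor
  · rintro ⟨c, h1, h2, h3⟩; exact ⟨c, ⟨h1, h2⟩, h3⟩
  · rintro ⟨c, ⟨h1, h2⟩, h3⟩; exact ⟨c, h1, h2, h3⟩

/-- `seg T` equals the number of pairs `(i,j)`, `1 ≤ i ≤ j ≤ r`,
with `a i j ≠ a (i-1) j`, i.e. the number of non-circled entries of `a(T)`. -/
theorem stmt2 (S : ShapedTableau) :
    S.seg = ((Finset.Icc 1 S.r ×ˢ Finset.Icc 1 S.r).filter
      (fun p => p.1 ≤ p.2 ∧ S.a p.1 p.2 ≠ S.a (p.1 - 1) p.2)).card := by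
  rw [ShapedTableau.seg]
  apply Finset.card_bij (fun p _ => (p.1, p.2 - 1))
  · rintro ⟨i, k⟩ hp
    simp only [ShapedTableau.segPairs, Finset.mem_filter, Finset.mem_product,
      Finset.mem_Icc] at hp
    obtain ⟨⟨⟨hi1, hi2⟩, ⟨hk1, hk2⟩⟩, hik, hap⟩ := hp
    simp only [Finset.mem_filter, Finset.mem_product, Finset.mem_Icc]
    have hk1' : i ≤ k - 1 := by omega
    refine ⟨⟨⟨hi1, hi2⟩, by omega, by omega⟩, hk1', ?_⟩
    rw [a_succ S i (k - 1) hi1]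
    have : k - 1 + 1 = k := by omega
    rw [this]
    have := (appears_iff_count S i k).mp hap
    omega
  · rintro ⟨i, k⟩ hp ⟨i', k'⟩ hp' h
    simp only [ShapedTableau.segPairs, Finset.mem_filter, Finset.mem_product,
      Finset.mem_Icc] at hp hp'
    simp only [Prod.mk.injEq] at h ⊢
    exact ⟨h.1, by omega⟩
  · rintro ⟨i, j⟩ hp
    simp only [Finset.mem_filter, Finset.mem_product, Finset.mem_Icc] at hp
    obtain ⟨⟨⟨hi1, hi2⟩, ⟨hj1, hj2⟩⟩, hij, hne⟩ := hp
    refine ⟨(i, j + 1), ?_, by simp⟩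
    simp only [ShapedTableau.segPairs, Finset.mem_filter, Finset.mem_product,
      Finset.mem_Icc]
    rw [a_succ S i j hi1] at hne
    refine ⟨⟨⟨hi1, hi2⟩, by omega, by omega⟩, by omega, ?_⟩
    rw [appears_iff_count]
    omega
end

section
/- Let T be a semistandard Young tableau of shape λ+ρ and let 1 ≤ i ≤ j ≤ r. If b_{i,j}(T) ≥ b_{i+1,j+1}(T) + θ_i, then in fact b_{i,j}(T) = b_{i+1,j+1}(T) + θ_i. -/
open scoped Classical

/-- `b_{i,j} ≥ b_{i+1,j+1} + θ_i` forces equality. -/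
theorem stmt4 (S : ShapedTableau) (i j : ℕ) (hi : 1 ≤ i) (hij : i ≤ j) (hj : j ≤ S.r)
    (h : S.b (i + 1) (j + 1) + S.θ i ≤ S.b i j) :
    S.b i j = S.b (i + 1) (j + 1) + S.θ i := by
  refine le_antisymm ?_ h
  have hir : i ≤ S.r := hij.trans hj
  have hl : S.len (i + 1) ≤ S.len i := (S.shape_strict i hi hir).le
  have hsplit : Finset.Icc 1 (S.len i) =
      Finset.Icc 1 (S.len (i + 1)) ∪ Finset.Ioc (S.len (i + 1)) (S.len i) := by
    ext c; simp only [Finset.mem_Icc, Finset.mem_union, Finset.mem_Ioc]; omega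
  unfold ShapedTableau.b ShapedTableau.cells ShapedTableau.θ
  rw [hsplit, Finset.filter_union]
  refine (Finset.card_union_le _ _).trans ?_
  have h1 : ((Finset.Icc 1 (S.len (i + 1))).filter (fun c => j + 1 ≤ S.T i c)).card ≤
      ((Finset.Icc 1 (S.len (i + 1))).filter (fun c => j + 1 + 1 ≤ S.T (i + 1) c)).card := by
    apply Finset.card_le_card
    intro c hc
    simp only [Finset.mem_filter, Finset.mem_Icc] at hc ⊢
    obtain ⟨⟨hc1, hc2⟩, hct⟩ := hc
    have hr2 : i + 1 ≤ S.r := by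
      by_contra hcon
      have := S.shape_zero (i + 1) (by omega)
      omega
    have := S.col_strict i c hi hr2 hc1 hc2
    exact ⟨⟨hc1, hc2⟩, by omega⟩
  have h2 : ((Finset.Ioc (S.len (i + 1)) (S.len i)).filter (fun c => j + 1 ≤ S.T i c)).card ≤
      S.len i - S.len (i + 1) := by
    calc _ ≤ (Finset.Ioc (S.len (i + 1)) (S.len i)).card := Finset.card_filter_le _ _
    _ = S.len i - S.len (i + 1) := Nat.card_Ioc _ _
  omega
end

section
/- Let T be a semistandard Young tableau of shape λ+ρ and 1 ≤ i < k ≤ r. Suppose (a) there is no k-segment in row i of T, and (b) there exists a smallest ℓ > k such that row i has an ℓ-segment, row i+1 has no p-segment for any k+1 ≤ p ≤ ℓ, and the ℓ-segment in row i is flush. Then the entry a_{i,k-1}(T) is both boxed and circled, i.e., a_{i,k-1}(T) = a_{i-1,k-1}(T) and b_{i,k-1}(T) = b_{i+1,k}(T) + θ_i. -/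
open scoped Classical

lemma ShapedTableau.row_mono (S : ShapedTableau) (i : ℕ) (hi1 : 1 ≤ i) (hir : i ≤ S.r) :
    ∀ c c', 1 ≤ c → c ≤ c' → c' ≤ S.len i → S.T i c ≤ S.T i c' := by
  intro c c' hc hcc'
  induction c', hcc' using Nat.le_induction with
  | base => intro _; exact le_refl _
  | succ n hn ih =>
    intro h
    exact le_trans (ih (by omega)) (S.row_weak i n hi1 hir (by omega) h)

lemma ShapedTableau.lm_mem (S : ShapedTableau) (i v : ℕ) (hv : S.appears i v) :
    1 ≤ S.lm i v ∧ S.lm i v ≤ S.len i ∧ S.T i (S.lm i v) = v :=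
  Nat.sInf_mem (hv : {c | 1 ≤ c ∧ c ≤ S.len i ∧ S.T i c = v}.Nonempty)

lemma ShapedTableau.filter_ge_eq_Icc (S : ShapedTableau) (i v : ℕ) (hi1 : 1 ≤ i)
    (hir : i ≤ S.r) (hv : S.appears i v) :
    (S.cells i).filter (fun c => v ≤ S.T i c) = Finset.Icc (S.lm i v) (S.len i) := by
  obtain ⟨h1, h2, h3⟩ := S.lm_mem i v hv
  ext c
  simp only [Finset.mem_filter, ShapedTableau.cells, Finset.mem_Icc]
  constructor
  · rintro ⟨⟨hc1, hc2⟩, hc3⟩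
    refine ⟨?_, hc2⟩
    by_contra hlt
    push_neg at hlt
    have hmono := S.row_mono i hi1 hir c (S.lm i v) hc1 (by omega) h2
    have heq : S.T i c = v := le_antisymm (by omega) hc3
    have hle : S.lm i v ≤ c :=
      Nat.sInf_le (show c ∈ {c | 1 ≤ c ∧ c ≤ S.len i ∧ S.T i c = v} from ⟨hc1, hc2, heq⟩)
    omega
  · rintro ⟨hc1, hc2⟩
    exact ⟨⟨le_trans h1 hc1, hc2⟩, h3 ▸ S.row_mono i hi1 hir (S.lm i v) c h1 hc1 hc2⟩



/-- the gap conditions (a), (b) at `(i,k)` imply that `a_{i,k-1}`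
is both circled and boxed. -/
theorem stmt5 (S : ShapedTableau) (i k L : ℕ) (hi : 1 ≤ i) (hik : i < k) (hk : k ≤ S.r)
    (hno : ¬ S.appears i k) (hkL : k < L) (hL : S.appears i L)
    (hmin : ∀ m, k < m → m < L → ¬ S.appears i m)
    (hbelow : ∀ p, k + 1 ≤ p → p ≤ L → ¬ S.appears (i + 1) p)
    (hflush : S.IsFlush i L) :
    S.a i (k - 1) = S.a (i - 1) (k - 1) ∧ S.b i (k - 1) = S.b (i + 1) k + S.θ i := by
  have hk2 : 2 ≤ k := by omega
  have hir : i ≤ S.r := by omega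
  have hir1 : i + 1 ≤ S.r := by omega
  have hlen : S.len (i + 1) < S.len i := S.shape_strict i hi hir
  obtain ⟨hlm1, hlm2, hlm3⟩ := S.lm_mem i L hL
  constructor
  · -- circled part
    obtain ⟨j, rfl⟩ : ∃ j, i = j + 1 := ⟨i - 1, by omega⟩
    have hcount : S.count (j + 1) (k - 1 + 1) = 0 := by
      rw [ShapedTableau.count, Finset.card_eq_zero, Finset.filter_eq_empty_iff]
      intro c hc
      simp only [ShapedTableau.cells, Finset.mem_Icc] at hc
      intro he
      exact hno ⟨c, hc.1, hc.2, by omega⟩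
    rw [ShapedTableau.a, ShapedTableau.a, Finset.sum_Icc_succ_top (by omega : 1 ≤ j + 1),
      hcount, add_zero]
    rfl
  · -- boxed part
    have hb1 : S.b i (k - 1) = ((S.cells i).filter (fun c => L ≤ S.T i c)).card := by
      rw [ShapedTableau.b]
      congr 1
      apply Finset.filter_congr
      intro c hc
      simp only [ShapedTableau.cells, Finset.mem_Icc] at hc
      constructor
      · intro h
        by_contra h'
        push_neg at h'
        rcases eq_or_lt_of_le (show k ≤ S.T i c by omega) with he | hl
        · exact hno ⟨c, hc.1, hc.2, he.symm⟩
        · exact hmin _ hl h' ⟨c, hc.1, hc.2, rfl⟩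
      · intro h; omega
    rw [hb1, S.filter_ge_eq_Icc i L hi hir hL, Nat.card_Icc]
    rcases hflush with ⟨hex, hlmEq⟩ | ⟨hnex, hcnt⟩
    · -- flush via next row
      set M := S.nextBelow i L with hM
      have hMmem : L < M ∧ S.appears (i + 1) M :=
        Nat.sInf_mem (hex : {m | L < m ∧ S.appears (i + 1) m}.Nonempty)
      obtain ⟨hLM, hMap⟩ := hMmem
      obtain ⟨hlm1', hlm2', hlm3'⟩ := S.lm_mem (i + 1) M hMap
      have hb2 : S.b (i + 1) k = ((S.cells (i + 1)).filter (fun c => M ≤ S.T (i + 1) c)).card := by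
        rw [ShapedTableau.b]
        congr 1
        apply Finset.filter_congr
        intro c hc
        simp only [ShapedTableau.cells, Finset.mem_Icc] at hc
        constructor
        · intro h
          have happ : S.appears (i + 1) (S.T (i + 1) c) := ⟨c, hc.1, hc.2, rfl⟩
          have hgtL : L < S.T (i + 1) c := by
            by_contra h'
            push_neg at h'
            exact hbelow _ h h' happ
          exact Nat.sInf_le (show S.T (i + 1) c ∈ {m | L < m ∧ S.appears (i + 1) m} from
            ⟨hgtL, happ⟩)
        · intro h; omega
      rw [hb2, S.filter_ge_eq_Icc (i + 1) M (by omega) hir1 hMap, Nat.card_Icc]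
      rw [hlmEq] at hlm1 hlm2 ⊢
      rw [ShapedTableau.θ]
      omega
    · -- flush via length
      have hb2 : S.b (i + 1) k = 0 := by
        rw [ShapedTableau.b, Finset.card_eq_zero, Finset.filter_eq_empty_iff]
        intro c hc
        simp only [ShapedTableau.cells, Finset.mem_Icc] at hc
        intro h
        have happ : S.appears (i + 1) (S.T (i + 1) c) := ⟨c, hc.1, hc.2, rfl⟩
        rcases le_or_gt (S.T (i + 1) c) L with h' | h'
        · exact hbelow _ h h' happ
        · exact hnex ⟨S.T (i + 1) c, h', happ⟩
      have hsplit : (S.cells i).filter (fun c => L ≤ S.T i c) =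
          ((S.cells i).filter (fun c => S.T i c = L)) ∪
          ((S.cells i).filter (fun c => L + 1 ≤ S.T i c)) := by
        ext c
        simp only [Finset.mem_filter, Finset.mem_union]
        constructor
        · rintro ⟨hc, h⟩
          rcases eq_or_lt_of_le h with he | hl
          · exact Or.inl ⟨hc, he.symm⟩
          · exact Or.inr ⟨hc, hl⟩
        · rintro (⟨hc, h⟩ | ⟨hc, h⟩)
          · exact ⟨hc, le_of_eq h.symm⟩
          · exact ⟨hc, by omega⟩
      have hdisj : Disjoint ((S.cells i).filter (fun c => S.T i c = L))
          ((S.cells i).filter (fun c => L + 1 ≤ S.T i c)) := by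
        simp only [Finset.disjoint_left, Finset.mem_filter]
        rintro c ⟨hc, h1⟩ ⟨-, h2⟩
        omega
      have hcard : ((S.cells i).filter (fun c => L ≤ S.T i c)).card =
          S.count i L + ((S.cells i).filter (fun c => L + 1 ≤ S.T i c)).card := by
        rw [ShapedTableau.count, ← Finset.card_union_of_disjoint hdisj, ← hsplit]
      have hicc : ((S.cells i).filter (fun c => L ≤ S.T i c)).card =
          S.len i + 1 - S.lm i L := by
        rw [S.filter_ge_eq_Icc i L hi hir hL, Nat.card_Icc]
      set t := ((S.cells i).filter (fun c => L + 1 ≤ S.T i c)).card with ht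
      rcases Nat.eq_zero_or_pos t with h0 | hpos
      · rw [hb2, ShapedTableau.θ] at *
        omega
      · exfalso
        rw [ShapedTableau.θ] at hcnt
        have hle : S.lm i L ≤ S.len (i + 1) := by omega
        have := S.col_strict i (S.lm i L) hi hir1 hlm1 hle
        rw [hlm3] at this
        exact hnex ⟨S.T (i + 1) (S.lm i L), this, ⟨S.lm i L, hlm1, by omega, rfl⟩⟩
end
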